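/- arXiv:2507.03574 — 8 statements merged into one kernel-verified Lean document; each statement's English description precedes it below -/
import Mathlib

section
/- Let R be a Noetherian ring, X a finite poset, and φ : X → Spec(R) a coheight-preserving saturated embedding along the set Min(R) of minimal prime ideals of R. Then φ maps the set of minimal elements of X onto Min(R), i.e., φ(min X) = Min(R). -/
/-! Every prime contains a minimal prime, and every minimal prime is `φ z` for some `z`. If `x` is
minimal in `X` and `φ z ≤ φ x` is a minimal prime, then `z ≤ x` forces `x ≤ z`, so `φ x = φ z`;
conversely an element sent to a minimal prime is minimal because `φ` reflects the order. -/

section OrderEmbedding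

variable {α β : Type*} [Preorder α] [Preorder β] {f : α → β}

theorem isMin_of_isMin_apply (hf : ∀ a b, a ≤ b ↔ f a ≤ f b) {x : α} (hx : IsMin (f x)) :
    IsMin x :=
  fun y hyx => (hf x y).mpr (hx ((hf y x).mp hyx))

theorem isMin_apply_of_isMin (hf : ∀ a b, a ≤ b ↔ f a ≤ f b)
    (hmin : {y : β | IsMin y} ⊆ Set.range f) (hbelow : ∀ y : β, ∃ m, IsMin m ∧ m ≤ y)
    {x : α} (hx : IsMin x) : IsMin (f x) := by
  obtain ⟨m, hm, hmx⟩ := hbelow (f x)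
  obtain ⟨z, rfl⟩ := hmin hm
  have hxz : f x ≤ f z := (hf x z).mp (hx ((hf z x).mpr hmx))
  exact fun y hy => hxz.trans (hm (hy.trans hxz))

theorem image_setOf_isMin_eq (hf : ∀ a b, a ≤ b ↔ f a ≤ f b)
    (hmin : {y : β | IsMin y} ⊆ Set.range f) (hbelow : ∀ y : β, ∃ m, IsMin m ∧ m ≤ y) :
    f '' {x : α | IsMin x} = {y : β | IsMin y} := by
  refine Set.Subset.antisymm ?_ fun y hy => ?_
  · rintro _ ⟨x, hx, rfl⟩
    exact isMin_apply_of_isMin hf hmin hbelow hx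
  · obtain ⟨x, rfl⟩ := hmin hy
    exact ⟨x, isMin_of_isMin_apply hf hy, rfl⟩

end OrderEmbedding

theorem PrimeSpectrum.exists_isMin_le {R : Type*} [CommRing R] (P : PrimeSpectrum R) :
    ∃ Q : PrimeSpectrum R, IsMin Q ∧ Q ≤ P := by
  obtain ⟨Q, hQ, hQP⟩ := Ideal.exists_minimalPrimes_le (bot_le : ⊥ ≤ P.asIdeal)
  exact ⟨⟨Q, hQ.1.1⟩, PrimeSpectrum.isMin_iff.mpr hQ, hQP⟩

theorem coheight_preserving_saturated_embedding_min_image_general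
    {X : Type*} [PartialOrder X]
    {R : Type*} [CommRing R]
    (φ : X → PrimeSpectrum R)
    (hemb : ∀ a b : X, a ≤ b ↔ φ a ≤ φ b)
    (hcoht : ∀ P : PrimeSpectrum R, P.asIdeal ∈ minimalPrimes R →
      ∃ x : X, φ x = P ∧
        ringKrullDim (R ⧸ P.asIdeal) = Order.krullDim ↥(Set.Ici x)) :
    φ '' {x : X | IsMin x} = {P : PrimeSpectrum R | P.asIdeal ∈ minimalPrimes R} := by
  have hmin : {P : PrimeSpectrum R | IsMin P} ⊆ Set.range φ := fun P hP =>
    let ⟨x, hx, _⟩ := hcoht P (PrimeSpectrum.isMin_iff.mp hP)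
    ⟨x, hx⟩
  simpa only [PrimeSpectrum.isMin_iff] using
    image_setOf_isMin_eq hemb hmin PrimeSpectrum.exists_isMin_le

/-- If `R` is a Noetherian ring, `X` a finite poset and
`φ : X → Spec R` a coheight-preserving saturated embedding along `Min(R)`,
then `φ` maps the minimal elements of `X` onto the minimal primes of `R`. -/
theorem coheight_preserving_saturated_embedding_min_image
    {X : Type*} [PartialOrder X] [Finite X]
    {R : Type*} [CommRing R] [IsNoetherianRing R]
    (φ : X → PrimeSpectrum R)
    (hemb : ∀ a b : X, a ≤ b ↔ φ a ≤ φ b)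
    (hsat : ∀ a b : X, a ⋖ b → φ a ⋖ φ b)
    (hcoht : ∀ P : PrimeSpectrum R, P.asIdeal ∈ minimalPrimes R →
      ∃ x : X, φ x = P ∧
        ringKrullDim (R ⧸ P.asIdeal) = Order.krullDim ↥(Set.Ici x)) :
    φ '' {x : X | IsMin x} = {P : PrimeSpectrum R | P.asIdeal ∈ minimalPrimes R} :=
  coheight_preserving_saturated_embedding_min_image_general φ hemb hcoht
end

section
/- Let X be a finite poset with a unique maximal node, let Y be a height zero gluing of X along C with gluing map g : X → Y, and let x_0 be a minimal node of X. Then dim(g(x_0)↑ in Y) = max{ dim(x↑ in X) : x ∈ X minimal with g(x) = g(x_0) }. -/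
/-- Lift a strict chain in `Y` along `g`, given a one-step downward lifting
property. -/
theorem lift_chain_aux {X Y : Type*} [PartialOrder X] [PartialOrder Y]
    (g : X → Y) (hsurj : Function.Surjective g)
    (step : ∀ (y' : X) (b : Y), b < g y' → ∃ x', x' < y' ∧ g x' = b) :
    ∀ (n : ℕ) (b : Fin (n + 1) → Y), (∀ i : Fin n, b i.castSucc < b i.succ) →
      ∃ a : Fin (n + 1) → X, (∀ i : Fin n, a i.castSucc < a i.succ) ∧ ∀ i, g (a i) = b i := by
  intro n
  induction n with
  | zero =>
    intro b _
    obtain ⟨c, hc⟩ := hsurj (b 0)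
    refine ⟨fun _ => c, fun i => i.elim0, fun i => ?_⟩
    have : i = 0 := Fin.ext (by omega)
    rw [this]; exact hc
  | succ n ih =>
    intro b hb
    obtain ⟨a', ha'step, ha'⟩ := ih (fun i => b i.succ) (fun i => by
      have := hb i.succ
      rwa [← Fin.succ_castSucc] at this)
    have h0 : b 0 < g (a' 0) := by
      rw [ha' 0]
      have := hb 0
      simpa using this
    obtain ⟨a₀, ha₀lt, ha₀⟩ := step (a' 0) (b 0) h0
    refine ⟨Fin.cons a₀ a', ?_, ?_⟩
    · intro i
      induction i using Fin.cases with
      | zero => simpa using ha₀lt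
      | succ j =>
        rw [← Fin.succ_castSucc, Fin.cons_succ, Fin.cons_succ]
        exact ha'step j
    · intro i
      induction i using Fin.cases with
      | zero => simpa using ha₀
      | succ j => simpa using ha' j

/-- Let `X` be a finite poset with a unique maximal node, `Y` a height zero
gluing of `X` along `C ⊆ min X` with gluing map `g`, and `x₀` a minimal node of
`X`.  Then the dimension of the up-set of `g x₀` in `Y` equals the maximum of
the dimensions of the up-sets in `X` of minimal nodes `x` with `g x = g x₀`. -/
theorem dim_upset_of_height_zero_gluing
    {X Y : Type*} [PartialOrder X] [PartialOrder Y] [Finite X]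
    (hmax : ∃! m : X, IsMax m)
    (C : Set X) (hC : C ⊆ {x : X | IsMin x})
    (g : X → Y) (hmono : Monotone g) (hsurj : Function.Surjective g)
    (huniv : ∀ (Z : Type*) [PartialOrder Z] (h : X → Z), Monotone h →
      (∀ x x' : X, g x = g x' → h x = h x') →
      ∃! φ : Y → Z, Monotone φ ∧ φ ∘ g = h)
    (hconst : ∀ x ∈ C, ∀ x' ∈ C, g x = g x')
    (hid : ∀ x x' : X, g x = g x' → x ≠ x' → x ∈ C ∧ x' ∈ C)
    (x₀ : X) (hx₀ : IsMin x₀) :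
    Order.krullDim ↥(Set.Ici (g x₀)) =
      ⨆ x : {x : X // IsMin x ∧ g x = g x₀}, Order.krullDim ↥(Set.Ici x.1) := by
  classical
  -- g is strictly monotone
  have hstrict : StrictMono g := by
    intro a b hab
    refine lt_of_le_of_ne (hmono hab.le) ?_
    intro heq
    obtain ⟨haC, hbC⟩ := hid a b heq hab.ne
    exact hab.ne (le_antisymm hab.le (hC hbC hab.le))
  -- Key order description: g x ≤ g y implies x ≤ y or (x ∈ C and some t ∈ C is below y)
  have lemA : ∀ x y : X, g x ≤ g y → x ≤ y ∨ (x ∈ C ∧ ∃ t ∈ C, t ≤ y) := by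
    intro x y hxy
    set D : X → Prop := fun z => z ≤ y ∨ (z ∈ C ∧ ∃ t ∈ C, t ≤ y) with hD
    have hDdown : ∀ z z' : X, z ≤ z' → D z' → D z := by
      intro z z' hzz' hz'
      rcases hz' with h | ⟨hz'C, ht⟩
      · exact Or.inl (hzz'.trans h)
      · have : z = z' := le_antisymm hzz' (hC hz'C hzz')
        exact this ▸ Or.inr ⟨hz'C, ht⟩
    have hDfib : ∀ z z' : X, g z = g z' → (D z ↔ D z') := by
      intro z z' hg
      by_cases hzz' : z = z'
      · rw [hzz']
      · obtain ⟨hzC, hz'C⟩ := hid z z' hg hzz'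
        constructor
        · rintro (h | ⟨_, ht⟩)
          · exact Or.inr ⟨hz'C, z, hzC, h⟩
          · exact Or.inr ⟨hz'C, ht⟩
        · rintro (h | ⟨_, ht⟩)
          · exact Or.inr ⟨hzC, z', hz'C, h⟩
          · exact Or.inr ⟨hzC, ht⟩
    set h : X → Bool := fun z => if D z then false else true with hh
    have hhmono : Monotone h := by
      intro z z' hzz'
      by_cases hz : D z
      · simp [hh, hz]
      · have : ¬ D z' := fun hz' => hz (hDdown z z' hzz' hz')
        simp [hh, hz, this]
    have hhfib : ∀ z z' : X, g z = g z' → h z = h z' := by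
      intro z z' hg
      have hDeq : D z = D z' := propext (hDfib z z' hg)
      simp [hh, hDeq]
    obtain ⟨φ, ⟨hφmono, hφcomp⟩, -⟩ := huniv (ULift Bool) (fun z => ULift.up (h z))
      (fun _ _ hzz => hhmono hzz) (fun z z' hg => congrArg ULift.up (hhfib z z' hg))
    have hphi : h x ≤ h y := by
      have h1 := hφmono hxy
      have hx' : φ (g x) = ULift.up (h x) := congrFun hφcomp x
      have hy' : φ (g y) = ULift.up (h y) := congrFun hφcomp y
      rw [hx', hy'] at h1
      exact h1
    have hDy : D y := Or.inl le_rfl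
    by_contra hDx
    rw [show h y = false by simp [hh, hDy], show h x = true by simp [hh]; exact hDx] at hphi
    exact absurd hphi (by decide)
  -- one-step downward lifting
  have step : ∀ (y' : X) (b : Y), b < g y' → ∃ x', x' < y' ∧ g x' = b := by
    intro y' b hb
    obtain ⟨c, hc⟩ := hsurj b
    rcases lemA c y' (hc ▸ hb.le) with h | ⟨hcC, t, htC, hty⟩
    · refine ⟨c, lt_of_le_of_ne h ?_, hc⟩
      rintro rfl; exact hb.ne hc.symm
    · have hgt : g t = b := (hconst t htC c hcC).trans hc
      refine ⟨t, lt_of_le_of_ne hty ?_, hgt⟩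
      rintro rfl; exact hb.ne hgt.symm
  apply le_antisymm
  · -- LHS ≤ RHS: lift chains
    refine iSup_le fun p => ?_
    set n := p.length with hn
    obtain ⟨a, hastep, hag⟩ := lift_chain_aux g hsurj step n
      (fun i => (p i : Y)) (fun i => p.step i)
    -- find a minimal x with g x = g x₀ below a 0
    have hbot : g x₀ ≤ g (a 0) := by
      rw [hag 0]; exact (p 0).2
    have hex : ∃ x : X, IsMin x ∧ g x = g x₀ ∧ x ≤ a 0 := by
      rcases lemA x₀ (a 0) hbot with h | ⟨_, t, htC, hta⟩
      · exact ⟨x₀, hx₀, rfl, h⟩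
      · rcases lemA x₀ (a 0) hbot with h | ⟨hx₀C, -⟩
        · exact ⟨x₀, hx₀, rfl, h⟩
        · exact ⟨t, hC htC, hconst t htC x₀ hx₀C, hta⟩
    obtain ⟨x, hxmin, hxg, hxle⟩ := hex
    -- build an LTSeries in X
    let A : LTSeries X := ⟨n, a, hastep⟩
    have hAmono : Monotone a := A.monotone
    have hxi : ∀ i, x ≤ a i := fun i => hxle.trans (hAmono (Fin.zero_le i))
    let q : LTSeries ↥(Set.Ici x) :=
      ⟨n, fun i => ⟨a i, hxi i⟩, fun i => by exact hastep i⟩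
    calc (p.length : WithBot ℕ∞) = (q.length : WithBot ℕ∞) := rfl
      _ ≤ Order.krullDim ↥(Set.Ici x) := Order.LTSeries.length_le_krullDim q
      _ ≤ _ := le_iSup (fun x : {x : X // IsMin x ∧ g x = g x₀} =>
          Order.krullDim ↥(Set.Ici x.1)) ⟨x, hxmin, hxg⟩
  · -- RHS ≤ LHS: g restricts to a strict mono map on each up-set
    refine iSup_le fun x => ?_
    refine Order.krullDim_le_of_strictMono
      (fun z : ↥(Set.Ici x.1) => (⟨g z.1, x.2.2.symm.trans_le (hmono z.2)⟩ : ↥(Set.Ici (g x₀)))) ?_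
    intro z z' hzz'
    exact hstrict hzz'
end

section
/- Let X be a finite poset of dimension > 0, let x be a simple height one node of X (i.e., for every u < x, x is the only node covering u), let D_x = {u ∈ X : u < x}, and let X' = X \ D_x be the retraction of X at x. If dim(X) = dim(u↑ in X) for some u ∈ D_x, then dim(X) = dim(x↑ in X') + 1. -/
open Classical

/-- An order with a distinguished element `u` such that every element is `≥ u`
is isomorphic to `WithBot` of the strict upper set of `u`. -/
noncomputable def iciWithBotIso {X : Type*} [PartialOrder X] (u : X) :
    Set.Ici u ≃o WithBot (Set.Ioi u) where
  toFun v := if h : v.1 = u then ⊥ else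
    ↑(⟨v.1, lt_of_le_of_ne v.2 (Ne.symm h)⟩ : Set.Ioi u)
  invFun w := WithBot.recBotCoe ⟨u, le_refl u⟩ (fun w => ⟨w.1, w.2.le⟩) w
  left_inv v := by
    by_cases h : v.1 = u
    · simp only [h, dif_pos]
      exact Subtype.ext h.symm
    · simp only [h, dif_neg, not_false_iff]
      rfl
  right_inv w := by
    induction w using WithBot.recBotCoe with
    | bot => simp
    | coe w =>
      have : w.1 ≠ u := (ne_of_gt w.2)
      simp [this]
  map_rel_iff' := by
    rintro ⟨a, ha⟩ ⟨b, hb⟩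
    dsimp only [Equiv.coe_fn_mk]
    by_cases h1 : a = u
    · rw [dif_pos h1]
      simp only [bot_le, true_iff]
      exact h1 ▸ hb
    · rw [dif_neg h1]
      by_cases h2 : b = u
      · rw [dif_pos h2]
        simp only [WithBot.not_coe_le_bot, false_iff]
        intro hab
        exact h1 (le_antisymm (h2 ▸ hab) ha)
      · rw [dif_neg h2, WithBot.coe_le_coe]
        exact Iff.rfl

/-- Let `X` be a finite poset of positive dimension, `x` a simple height one
node, `D_x = {u | u < x}` and `X' = X \ D_x` the retraction of `X` at `x`.
If `dim X = dim (u↑)` for some `u ∈ D_x`, then `dim X = dim (x↑ in X') + 1`. -/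
theorem dim_of_retraction
    {X : Type*} [PartialOrder X] [Finite X]
    (hdim : 0 < Order.krullDim X)
    (x : X) (hx : Order.height x = 1)
    (hsimple : ∀ u : X, u < x → ∀ v : X, u ⋖ v → v = x)
    (u : X) (hu : u < x)
    (hdimu : Order.krullDim X = Order.krullDim ↥(Set.Ici u)) :
    Order.krullDim X =
      Order.krullDim ↥(Set.Ici (⟨x, lt_irrefl x⟩ : {y : X // ¬ y < x})) + 1 := by
  classical
  have := Fintype.ofFinite X
  -- Every element strictly above `u` is above `x`.
  have hIoi : Set.Ioi u = Set.Ici x := by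
    ext v
    constructor
    · intro hv
      obtain ⟨w, hw, hwv⟩ := exists_covBy_le_of_lt (hv : u < v)
      exact (hsimple u hu w hw) ▸ hwv
    · intro hv
      exact lt_of_lt_of_le hu hv
  -- The up-set of `x` in `X'` is isomorphic to the up-set of `x` in `X`.
  have iso2 : Set.Ici (⟨x, lt_irrefl x⟩ : {y : X // ¬ y < x}) ≃o Set.Ici x :=
    { toFun := fun v => ⟨v.1.1, v.2⟩
      invFun := fun v => ⟨⟨v.1, fun h => lt_irrefl x (lt_of_le_of_lt v.2 h)⟩, v.2⟩
      left_inv := fun v => rfl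
      right_inv := fun v => rfl
      map_rel_iff' := Iff.rfl }
  have hne : Nonempty (Set.Ioi u) := ⟨⟨x, hu⟩⟩
  have h1 : Order.krullDim ↥(Set.Ici u) = Order.krullDim ↥(Set.Ioi u) + 1 := by
    rw [Order.krullDim_eq_of_orderIso (iciWithBotIso u), Order.krullDim_withBot]
  rw [hdimu, h1, hIoi, Order.krullDim_eq_of_orderIso iso2]
end

section
/- Let (S, M) and (B, B ∩ M) be reduced Noetherian local rings with B ⊆ S and \widehat{B} = \widehat{S}, such that the map f : Spec(S) → Spec(B), f(P) = P ∩ B, is surjective and satisfies f(P)S = P for every prime P of S of positive height. If P₁ ∩ B ⊇ P₂ ∩ B for primes P₁, P₂ of S, then there exists a prime Q of S with Q ⊆ P₁ and Q ∩ B = P₂ ∩ B. -/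
/-!
Since `B̂ ≅ Ŝ` compatibly with `B → S`, the completion `Ŝ` is flat over `B`, so `B → Ŝ` has
going down. As `Ŝ` is faithfully flat over `S`, every prime of `S` is the contraction of a prime
of `Ŝ`, and going down for `B → Ŝ` descends to going down for `B → S`, which is the claim.
-/

open IsLocalRing

lemma GeneralizingMap.of_comp_of_surjective {X Y Z : Type*} [TopologicalSpace X]
    [TopologicalSpace Y] [TopologicalSpace Z] {f : X → Y} {g : Y → Z}
    (hf : Continuous f) (hf' : Function.Surjective f) (hgf : GeneralizingMap (g ∘ f)) :
    GeneralizingMap g := by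
  intro y z hz
  obtain ⟨x, rfl⟩ := hf' y
  obtain ⟨x', hx', rfl⟩ := hgf hz
  exact ⟨f x', hx'.map hf, rfl⟩

namespace Algebra.HasGoingDown

variable (R S T : Type*) [CommRing R] [CommRing S] [CommRing T] [Algebra R S] [Algebra R T]
  [Algebra S T] [IsScalarTower R S T]

lemma of_comap_surjective [Algebra.HasGoingDown R T]
    (h : Function.Surjective (PrimeSpectrum.comap (algebraMap S T))) :
    Algebra.HasGoingDown R S := by
  have hRT := (iff_generalizingMap_primeSpectrumComap (R := R) (S := T)).mp ‹_›
  rw [IsScalarTower.algebraMap_eq R S T, PrimeSpectrum.comap_comp] at hRT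
  exact iff_generalizingMap_primeSpectrumComap.mpr
    (.of_comp_of_surjective (PrimeSpectrum.continuous_comap _) h hRT)

lemma of_faithfullyFlat [Algebra.HasGoingDown R T] [Module.FaithfullyFlat S T] :
    Algebra.HasGoingDown R S :=
  of_comap_surjective R S T PrimeSpectrum.comap_surjective_of_faithfullyFlat

end Algebra.HasGoingDown

lemma Ideal.exists_isPrime_le_comap_eq_of_comap_le {R S : Type*} [CommRing R] [CommRing S]
    [Algebra R S] [Algebra.HasGoingDown R S] (P₁ P₂ : Ideal S) [P₁.IsPrime] [P₂.IsPrime]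
    (h : P₂.comap (algebraMap R S) ≤ P₁.comap (algebraMap R S)) :
    ∃ Q : Ideal S, Q.IsPrime ∧ Q ≤ P₁ ∧
      Q.comap (algebraMap R S) = P₂.comap (algebraMap R S) := by
  obtain ⟨Q, hQP₁, hQ, hQ₂⟩ :=
    Ideal.exists_ideal_le_liesOver_of_le (p := P₂.under R) (q := P₁.under R) P₁ h
  exact ⟨Q, hQ, hQP₁, hQ₂.over.symm⟩

instance AdicCompletion.faithfullyFlat_maximalIdeal (R : Type*) [CommRing R]
    [IsNoetherianRing R] [IsLocalRing R] :
    Module.FaithfullyFlat R (AdicCompletion (maximalIdeal R) R) :=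
  .of_flat_of_isLocalHom

lemma Module.Flat.of_ringEquiv {R A C : Type*} [CommRing R] [CommRing A] [CommRing C]
    [Algebra R A] [Algebra R C] [Module.Flat R A] (e : A ≃+* C)
    (he : ∀ r : R, e (algebraMap R A r) = algebraMap R C r) : Module.Flat R C :=
  .of_linearEquiv (AlgEquiv.ofRingEquiv he).toLinearEquiv.symm

theorem exists_prime_below_of_comap_le_general
    {B S : Type*} [CommRing B] [CommRing S] [Algebra B S]
    [IsNoetherianRing B] [IsNoetherianRing S] [IsLocalRing B] [IsLocalRing S]
    (e : AdicCompletion (IsLocalRing.maximalIdeal B) B ≃+*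
      AdicCompletion (IsLocalRing.maximalIdeal S) S)
    (he : ∀ b : B,
      e (algebraMap B (AdicCompletion (IsLocalRing.maximalIdeal B) B) b) =
        algebraMap S (AdicCompletion (IsLocalRing.maximalIdeal S) S) (algebraMap B S b))
    (P₁ P₂ : Ideal S) (h₁ : P₁.IsPrime) (h₂ : P₂.IsPrime)
    (h : P₂.comap (algebraMap B S) ≤ P₁.comap (algebraMap B S)) :
    ∃ Q : Ideal S, Q.IsPrime ∧ Q ≤ P₁ ∧
      Q.comap (algebraMap B S) = P₂.comap (algebraMap B S) := by
  have : Module.Flat B (AdicCompletion (maximalIdeal S) S) :=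
    .of_ringEquiv e fun b ↦ (he b).trans (IsScalarTower.algebraMap_apply B S _ b).symm
  have : Algebra.HasGoingDown B S := .of_faithfullyFlat B S (AdicCompletion (maximalIdeal S) S)
  exact Ideal.exists_isPrime_le_comap_eq_of_comap_le P₁ P₂ h

/-- Let `(S, M)` and `(B, B ∩ M)` be reduced Noetherian local rings with
`B ⊆ S` and `B̂ = Ŝ`, such that `f : Spec S → Spec B`, `f(P) = P ∩ B`, is
surjective and satisfies `f(P)S = P` for every prime `P` of `S` of positive
height.  If `P₁ ∩ B ⊇ P₂ ∩ B` for primes `P₁, P₂` of `S`, then there exists a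
prime `Q` of `S` with `Q ⊆ P₁` and `Q ∩ B = P₂ ∩ B`. -/
theorem exists_prime_below_of_comap_le
    {B S : Type*} [CommRing B] [CommRing S] [Algebra B S]
    [IsNoetherianRing B] [IsNoetherianRing S] [IsLocalRing B] [IsLocalRing S]
    [IsReduced B] [IsReduced S]
    (hinj : Function.Injective (algebraMap B S))
    (e : AdicCompletion (IsLocalRing.maximalIdeal B) B ≃+*
      AdicCompletion (IsLocalRing.maximalIdeal S) S)
    (he : ∀ b : B,
      e (algebraMap B (AdicCompletion (IsLocalRing.maximalIdeal B) B) b) =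
        algebraMap S (AdicCompletion (IsLocalRing.maximalIdeal S) S) (algebraMap B S b))
    (hsurj : ∀ q : Ideal B, q.IsPrime →
      ∃ P : Ideal S, ∃ _ : P.IsPrime, P.comap (algebraMap B S) = q)
    (hext : ∀ P : Ideal S, (hP : P.IsPrime) →
      0 < Order.height (⟨P, hP⟩ : PrimeSpectrum S) →
      (P.comap (algebraMap B S)).map (algebraMap B S) = P)
    (P₁ P₂ : Ideal S) (h₁ : P₁.IsPrime) (h₂ : P₂.IsPrime)
    (h : P₂.comap (algebraMap B S) ≤ P₁.comap (algebraMap B S)) :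
    ∃ Q : Ideal S, Q.IsPrime ∧ Q ≤ P₁ ∧
      Q.comap (algebraMap B S) = P₂.comap (algebraMap B S) :=
  exists_prime_below_of_comap_le_general e he P₁ P₂ h₁ h₂ h
end

section
/- Let (S, M) and (B, B ∩ M) be reduced Noetherian local rings with B ⊆ S and \widehat{B} = \widehat{S}, such that f : Spec(S) → Spec(B), f(P) = P ∩ B, is surjective and f(P)S = P for all primes P of S of positive height. Then: (1) if Q is a minimal prime of S, then Q ∩ B is a minimal prime of B; (2) if P₁ ∩ B = P₂ ∩ B for primes P₁, P₂ of S, then either P₁ = P₂ or both P₁ and P₂ are minimal primes of S. -/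
/-!
`B̂` is flat over `B`, so `B → B̂` has going down and contracts minimal primes to minimal primes.
Since `S` embeds in `Ŝ ≅ B̂`, every minimal prime of `S` is the contraction of a minimal prime of
`Ŝ`, and the compatibility of `e` with `B → S` identifies `Q ∩ B` with a contraction from `B̂`.

For (2): a prime of positive height is extended from `B`, so it lies inside every prime with the
same contraction; a minimal prime containing another prime equals it.
-/

open IsLocalRing

namespace Ideal

variable {R S : Type*} [CommRing R] [CommRing S]

theorem comap_mem_minimalPrimes_of_hasGoingDown [Algebra R S] [Algebra.HasGoingDown R S]
    {Q : Ideal S} (hQ : Q ∈ minimalPrimes S) :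
    Q.comap (algebraMap R S) ∈ minimalPrimes R := by
  have := hQ.isPrime
  refine ⟨⟨IsPrime.comap _, bot_le⟩, fun p ⟨hp, _⟩ hle ↦ ?_⟩
  obtain ⟨P, hPQ, hP, hPp⟩ := Q.exists_ideal_le_liesOver_of_le (p := p) (q := Q.under R) hle
  rw [hPp.over]
  exact comap_mono (hQ.2 ⟨hP, bot_le⟩ hPQ)

theorem exists_mem_minimalPrimes_comap_eq_of_injective {f : R →+* S}
    (hf : Function.Injective f) {p : Ideal R} (hp : p ∈ minimalPrimes R) :
    ∃ P ∈ minimalPrimes S, P.comap f = p :=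
  exists_minimalPrimes_comap_eq f p (by rwa [comap_bot_of_injective f hf])

theorem comap_mem_minimalPrimes_of_ringEquiv (e : R ≃+* S) {P : Ideal S}
    (hP : P ∈ minimalPrimes S) : P.comap e ∈ minimalPrimes R := by
  have := minimalPrimes_comap_of_surjective (f := (e : R →+* S)) e.surjective hP
  rwa [comap_coe, comap_coe, comap_bot_of_injective _ e.injective] at this

theorem eq_or_mem_minimalPrimes_of_comap_eq {f : R →+* S} {P₁ P₂ : Ideal S}
    (hP₁ : P₁.IsPrime) (hP₂ : P₂.IsPrime)
    (h₁ : P₁ ∈ minimalPrimes S ∨ (P₁.comap f).map f = P₁)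
    (h₂ : P₂ ∈ minimalPrimes S ∨ (P₂.comap f).map f = P₂)
    (hc : P₁.comap f = P₂.comap f) :
    P₁ = P₂ ∨ (P₁ ∈ minimalPrimes S ∧ P₂ ∈ minimalPrimes S) := by
  have le₁ : (P₁.comap f).map f = P₁ → P₁ ≤ P₂ := fun h ↦ h ▸ hc ▸ map_comap_le
  have le₂ : (P₂.comap f).map f = P₂ → P₂ ≤ P₁ := fun h ↦ h ▸ hc.symm ▸ map_comap_le
  rcases h₁ with m₁ | e₁ <;> rcases h₂ with m₂ | e₂
  · exact .inr ⟨m₁, m₂⟩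
  · exact .inl ((m₁.2 ⟨hP₂, bot_le⟩ (le₂ e₂)).antisymm (le₂ e₂))
  · exact .inl ((le₁ e₁).antisymm (m₂.2 ⟨hP₁, bot_le⟩ (le₁ e₁)))
  · exact .inl ((le₁ e₁).antisymm (le₂ e₂))

end Ideal

theorem PrimeSpectrum.asIdeal_mem_minimalPrimes_or_height_pos {R : Type*} [CommRing R]
    (P : PrimeSpectrum R) : P.asIdeal ∈ minimalPrimes R ∨ 0 < Order.height P := by
  rw [← Ideal.height_eq_zero_iff, PrimeSpectrum.height_eq_orderHeight, pos_iff_ne_zero]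
  exact em _

theorem comap_minimalPrime_and_comap_eq_cases_general
    {B S : Type*} [CommRing B] [CommRing S] [Algebra B S]
    [IsNoetherianRing B] [IsNoetherianRing S] [IsLocalRing B] [IsLocalRing S]
    (e : AdicCompletion (IsLocalRing.maximalIdeal B) B ≃+*
      AdicCompletion (IsLocalRing.maximalIdeal S) S)
    (he : ∀ b : B,
      e (algebraMap B (AdicCompletion (IsLocalRing.maximalIdeal B) B) b) =
        algebraMap S (AdicCompletion (IsLocalRing.maximalIdeal S) S) (algebraMap B S b))
    (hext : ∀ P : Ideal S, (hP : P.IsPrime) →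
      0 < Order.height (⟨P, hP⟩ : PrimeSpectrum S) →
      (P.comap (algebraMap B S)).map (algebraMap B S) = P) :
    (∀ Q : Ideal S, Q ∈ minimalPrimes S →
      Q.comap (algebraMap B S) ∈ minimalPrimes B) ∧
    (∀ P₁ P₂ : Ideal S, P₁.IsPrime → P₂.IsPrime →
      P₁.comap (algebraMap B S) = P₂.comap (algebraMap B S) →
      P₁ = P₂ ∨ (P₁ ∈ minimalPrimes S ∧ P₂ ∈ minimalPrimes S)) := by
  have hsquare : (e : AdicCompletion (maximalIdeal B) B →+* AdicCompletion (maximalIdeal S) S).comp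
      (algebraMap B _) = (algebraMap S _).comp (algebraMap B S) :=
    RingHom.ext he
  have hmin_or_extended (P : Ideal S) (hP : P.IsPrime) :
      P ∈ minimalPrimes S ∨ (P.comap (algebraMap B S)).map (algebraMap B S) = P :=
    (PrimeSpectrum.asIdeal_mem_minimalPrimes_or_height_pos ⟨P, hP⟩).imp_right (hext P hP)
  refine ⟨fun Q hQ ↦ ?_, fun P₁ P₂ hP₁ hP₂ ↦
    Ideal.eq_or_mem_minimalPrimes_of_comap_eq hP₁ hP₂ (hmin_or_extended P₁ hP₁) (hmin_or_extended P₂ hP₂)⟩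
  obtain ⟨Q', hQ', rfl⟩ :=
    Ideal.exists_mem_minimalPrimes_comap_eq_of_injective (f := algebraMap S _)
      (AdicCompletion.of_injective (maximalIdeal S) S) hQ
  rw [Ideal.comap_comap, ← hsquare, ← Ideal.comap_comap]
  exact Ideal.comap_mem_minimalPrimes_of_hasGoingDown
    (Ideal.comap_mem_minimalPrimes_of_ringEquiv e hQ')

/-- Let `(S, M)` and `(B, B ∩ M)` be reduced Noetherian local rings with
`B ⊆ S` and `B̂ = Ŝ`, such that `f : Spec S → Spec B`, `f(P) = P ∩ B`, is
surjective and `f(P)S = P` for all primes `P` of `S` of positive height.  Then: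
(1) if `Q` is a minimal prime of `S`, then `Q ∩ B` is a minimal prime of `B`;
(2) if `P₁ ∩ B = P₂ ∩ B` for primes `P₁, P₂` of `S`, then either `P₁ = P₂` or
both `P₁` and `P₂` are minimal primes of `S`. -/
theorem comap_minimalPrime_and_comap_eq_cases
    {B S : Type*} [CommRing B] [CommRing S] [Algebra B S]
    [IsNoetherianRing B] [IsNoetherianRing S] [IsLocalRing B] [IsLocalRing S]
    [IsReduced B] [IsReduced S]
    (hinj : Function.Injective (algebraMap B S))
    (e : AdicCompletion (IsLocalRing.maximalIdeal B) B ≃+*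
      AdicCompletion (IsLocalRing.maximalIdeal S) S)
    (he : ∀ b : B,
      e (algebraMap B (AdicCompletion (IsLocalRing.maximalIdeal B) B) b) =
        algebraMap S (AdicCompletion (IsLocalRing.maximalIdeal S) S) (algebraMap B S b))
    (hsurj : ∀ q : Ideal B, q.IsPrime →
      ∃ P : Ideal S, ∃ _ : P.IsPrime, P.comap (algebraMap B S) = q)
    (hext : ∀ P : Ideal S, (hP : P.IsPrime) →
      0 < Order.height (⟨P, hP⟩ : PrimeSpectrum S) →
      (P.comap (algebraMap B S)).map (algebraMap B S) = P) :
    (∀ Q : Ideal S, Q ∈ minimalPrimes S →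
      Q.comap (algebraMap B S) ∈ minimalPrimes B) ∧
    (∀ P₁ P₂ : Ideal S, P₁.IsPrime → P₂.IsPrime →
      P₁.comap (algebraMap B S) = P₂.comap (algebraMap B S) →
      P₁ = P₂ ∨ (P₁ ∈ minimalPrimes S ∧ P₂ ∈ minimalPrimes S)) :=
  comap_minimalPrime_and_comap_eq_cases_general e he hext
end

section
/- Let (S, M) and (B, B ∩ M) be reduced Noetherian local rings with B ⊆ S, \widehat{B} = \widehat{S}, such that f : Spec(S) → Spec(B), f(P) = P ∩ B, is surjective, f(P)S = P for every positive-height prime P of S, and f is injective on positive-height primes. Then for every minimal prime 𝔭 of B there exists a minimal prime P of S with P ∩ B = 𝔭 and dim(S/P) = dim(B/𝔭). -/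
/-!
`B̂ ≅ Ŝ` is flat over `B` and faithfully flat over `S`, so going down holds for `B → Ŝ` and
descends, along the surjection `Spec Ŝ → Spec S`, to going down for `B → S`. A prime `P` of
positive height is `(P ∩ B)S`, so contraction reflects inclusions out of non-minimal primes;
hence `Spec S → Spec B` is strictly monotone and `dim S/P ≤ dim B/𝔭` whenever `P ∩ B = 𝔭`.
Conversely, going down lifts a chain of maximal length starting at `𝔭` to a chain of `Spec S`
whose bottom contracts to `𝔭`, and a minimal prime below that bottom has `dim S/P ≥ dim B/𝔭`.
-/

section Order

variable {α β : Type*} [PartialOrder α] [PartialOrder β] {f : α → β}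

theorem Monotone.strictMono_of_reflect_le_of_not_isMin (hf : Monotone f)
    (hf_refl : ∀ a a', ¬IsMin a → f a ≤ f a' → a ≤ a') : StrictMono f := fun x y hxy =>
  (hf hxy.le).lt_of_not_ge fun hyx => hxy.not_ge (hf_refl y x (not_isMin_of_lt hxy) hyx)

theorem Relation.Fibration.of_comp_of_surjective {γ : Type*} [Preorder γ] {g : γ → α}
    (hfg : Relation.Fibration (· ≤ ·) (· ≤ ·) (f ∘ g)) (hg : Monotone g)
    (hgs : Function.Surjective g) : Relation.Fibration (· ≤ ·) (· ≤ ·) f := by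
  intro a b hb
  obtain ⟨c, rfl⟩ := hgs a
  obtain ⟨c', hc', rfl⟩ := hfg hb
  exact ⟨g c', hg hc', rfl⟩

theorem Relation.Fibration.exists_ltSeries_lift_head
    (hf : Relation.Fibration (· ≤ ·) (· ≤ ·) f) (l : LTSeries β) {a : α} (ha : f a = l.last) :
    ∃ L : LTSeries α, L.length = l.length ∧ f L.head = l.head := by
  induction l using RelSeries.inductionOn with
  | singleton b => exact ⟨RelSeries.singleton _ a, rfl, ha⟩
  | cons l b hb ih =>
    obtain ⟨L, hlen, hhead⟩ := ih (by simpa using ha)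
    obtain ⟨a', ha'L, hfa'⟩ := hf (hhead ▸ hb.le : b ≤ f L.head)
    have hlt : a' < L.head := ha'L.lt_of_ne fun h => hb.ne (by rw [← hfa', h, hhead])
    exact ⟨L.cons a' hlt, by simp [hlen], by simpa using hfa'⟩

theorem exists_isMin_apply_eq_coheight_eq (hmono : Monotone f)
    (hdown : Relation.Fibration (· ≤ ·) (· ≤ ·) f) (hsurj : Function.Surjective f)
    (hf_refl : ∀ a a', ¬IsMin a → f a ≤ f a' → a ≤ a') (hmin : ∀ a : α, ∃ m ≤ a, IsMin m)
    {b : β} (hb : IsMin b) (hfin : Order.coheight b ≠ ⊤) :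
    ∃ a, IsMin a ∧ f a = b ∧ Order.coheight a = Order.coheight b := by
  obtain ⟨n, hn⟩ := ENat.ne_top_iff_exists.mp hfin
  obtain ⟨l, rfl, hlen⟩ := Order.exists_series_of_coheight_eq_coe b hn.symm
  obtain ⟨a₀, ha₀⟩ := hsurj l.last
  obtain ⟨L, hLlen, hLhead⟩ := hdown.exists_ltSeries_lift_head l ha₀
  obtain ⟨a, haL, ha⟩ := hmin L.head
  have hfa : f a = l.head := le_antisymm (hLhead ▸ hmono haL) (hb (hLhead ▸ hmono haL))
  refine ⟨a, ha, hfa, le_antisymm ?_ ?_⟩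
  · exact hfa ▸ Order.coheight_le_coheight_apply_of_strictMono f
      (hmono.strictMono_of_reflect_le_of_not_isMin hf_refl) a
  · rw [← hn, ← hlen, ← hLlen]
    exact Order.length_le_coheight haL

end Order

section Ring

variable {R S : Type*} [CommRing R] [CommRing S]

theorem ringKrullDim_quotient_eq_coheight (p : PrimeSpectrum R) :
    ringKrullDim (R ⧸ p.asIdeal) = Order.coheight p := by
  rw [ringKrullDim_quotient, Order.coheight_eq_krullDim_Ici]
  rfl

theorem PrimeSpectrum.exists_isMin_le_s13 (p : PrimeSpectrum R) : ∃ q ≤ p, IsMin q := by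
  obtain ⟨q, hq, hqp⟩ := Ideal.exists_minimalPrimes_le (bot_le : ⊥ ≤ p.asIdeal)
  exact ⟨⟨q, hq.1.1⟩, hqp, isMin_iff.mpr hq⟩

theorem Algebra.HasGoingDown.fibration_comap [Algebra R S] [Algebra.HasGoingDown R S] :
    Relation.Fibration (· ≤ ·) (· ≤ ·) (PrimeSpectrum.comap (algebraMap R S)) := by
  intro P q hq
  obtain ⟨P', hP', rfl⟩ := iff_generalizingMap_primeSpectrumComap.mp ‹_›
    ((PrimeSpectrum.le_iff_specializes _ _).mp hq)
  exact ⟨P', (PrimeSpectrum.le_iff_specializes _ _).mpr hP', rfl⟩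

instance AdicCompletion.faithfullyFlat_of_isLocalRing [IsNoetherianRing R] [IsLocalRing R] :
    Module.FaithfullyFlat R (AdicCompletion (IsLocalRing.maximalIdeal R) R) :=
  .of_flat_of_isLocalHom

theorem fibration_comap_of_adicCompletion_ringEquiv [Algebra R S] [IsNoetherianRing R]
    [IsNoetherianRing S] [IsLocalRing S] {I : Ideal R}
    (e : AdicCompletion I R ≃+* AdicCompletion (IsLocalRing.maximalIdeal S) S)
    (he : ∀ r : R, e (algebraMap R (AdicCompletion I R) r) =
      algebraMap S (AdicCompletion (IsLocalRing.maximalIdeal S) S) (algebraMap R S r)) :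
    Relation.Fibration (· ≤ ·) (· ≤ ·) (PrimeSpectrum.comap (algebraMap R S)) := by
  set T := AdicCompletion (IsLocalRing.maximalIdeal S) S
  have : Module.Flat R T := .of_linearEquiv (AlgEquiv.ofRingEquiv (f := e)
    fun r => (he r).trans (IsScalarTower.algebraMap_apply R S T r).symm).symm.toLinearEquiv
  refine Relation.Fibration.of_comp_of_surjective (g := PrimeSpectrum.comap (algebraMap S T)) ?_
    (fun _ _ h => Ideal.comap_mono h) PrimeSpectrum.comap_surjective_of_faithfullyFlat
  rw [← PrimeSpectrum.comap_comp, ← IsScalarTower.algebraMap_eq]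
  exact Algebra.HasGoingDown.fibration_comap

end Ring

theorem exists_minimalPrime_with_coheight_eq_general
    {B S : Type*} [CommRing B] [CommRing S] [Algebra B S]
    [IsNoetherianRing B] [IsNoetherianRing S] [IsLocalRing B] [IsLocalRing S]
    (e : AdicCompletion (IsLocalRing.maximalIdeal B) B ≃+*
      AdicCompletion (IsLocalRing.maximalIdeal S) S)
    (he : ∀ b : B,
      e (algebraMap B (AdicCompletion (IsLocalRing.maximalIdeal B) B) b) =
        algebraMap S (AdicCompletion (IsLocalRing.maximalIdeal S) S) (algebraMap B S b))
    (hsurj : ∀ q : Ideal B, q.IsPrime →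
      ∃ P : Ideal S, ∃ _ : P.IsPrime, P.comap (algebraMap B S) = q)
    (hext : ∀ P : Ideal S, (hP : P.IsPrime) →
      0 < Order.height (⟨P, hP⟩ : PrimeSpectrum S) →
      (P.comap (algebraMap B S)).map (algebraMap B S) = P) :
    ∀ 𝔭 ∈ minimalPrimes B, ∃ P ∈ minimalPrimes S,
      P.comap (algebraMap B S) = 𝔭 ∧ ringKrullDim (S ⧸ P) = ringKrullDim (B ⧸ 𝔭) := by
  intro 𝔭 h𝔭
  set f := PrimeSpectrum.comap (algebraMap B S)
  have hf_surj : Function.Surjective f := fun q =>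
    let ⟨P, hP, hPq⟩ := hsurj q.asIdeal q.2
    ⟨⟨P, hP⟩, PrimeSpectrum.ext hPq⟩
  have hf_refl : ∀ P P' : PrimeSpectrum S, ¬IsMin P → f P ≤ f P' → P ≤ P' := fun P P' hP hle =>
    calc P.asIdeal = (f P).asIdeal.map (algebraMap B S) :=
          (hext _ P.2 (pos_iff_ne_zero.mpr (Order.height_eq_zero.not.mpr hP))).symm
      _ ≤ (f P').asIdeal.map (algebraMap B S) := Ideal.map_mono hle
      _ ≤ P'.asIdeal := Ideal.map_comap_le
  obtain ⟨P, hPmin, hfP, hcoh⟩ := exists_isMin_apply_eq_coheight_eq (f := f)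
    (fun _ _ h => Ideal.comap_mono h) (fibration_comap_of_adicCompletion_ringEquiv e he) hf_surj
    hf_refl PrimeSpectrum.exists_isMin_le_s13 (b := ⟨𝔭, h𝔭.1.1⟩) (PrimeSpectrum.isMin_iff.mpr h𝔭)
    (Order.coheight_lt_top _).ne
  refine ⟨P.asIdeal, PrimeSpectrum.isMin_iff.mp hPmin, congrArg PrimeSpectrum.asIdeal hfP, ?_⟩
  rw [ringKrullDim_quotient_eq_coheight P, hcoh]
  exact (ringKrullDim_quotient_eq_coheight _).symm

/-- Let `(S, M)` and `(B, B ∩ M)` be reduced Noetherian local rings with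
`B ⊆ S`, `B̂ = Ŝ`, such that `f : Spec S → Spec B`, `f(P) = P ∩ B`, is
surjective, `f(P)S = P` for every positive-height prime `P` of `S`, and `f` is
injective on positive-height primes.  Then for every minimal prime `𝔭` of `B`
there exists a minimal prime `P` of `S` with `P ∩ B = 𝔭` and
`dim(S/P) = dim(B/𝔭)`. -/
theorem exists_minimalPrime_with_coheight_eq
    {B S : Type*} [CommRing B] [CommRing S] [Algebra B S]
    [IsNoetherianRing B] [IsNoetherianRing S] [IsLocalRing B] [IsLocalRing S]
    [IsReduced B] [IsReduced S]
    (hinj : Function.Injective (algebraMap B S))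
    (e : AdicCompletion (IsLocalRing.maximalIdeal B) B ≃+*
      AdicCompletion (IsLocalRing.maximalIdeal S) S)
    (he : ∀ b : B,
      e (algebraMap B (AdicCompletion (IsLocalRing.maximalIdeal B) B) b) =
        algebraMap S (AdicCompletion (IsLocalRing.maximalIdeal S) S) (algebraMap B S b))
    (hsurj : ∀ q : Ideal B, q.IsPrime →
      ∃ P : Ideal S, ∃ _ : P.IsPrime, P.comap (algebraMap B S) = q)
    (hext : ∀ P : Ideal S, (hP : P.IsPrime) →
      0 < Order.height (⟨P, hP⟩ : PrimeSpectrum S) →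
      (P.comap (algebraMap B S)).map (algebraMap B S) = P)
    (hinj' : ∀ P P' : Ideal S, (hP : P.IsPrime) → (hP' : P'.IsPrime) →
      0 < Order.height (⟨P, hP⟩ : PrimeSpectrum S) →
      0 < Order.height (⟨P', hP'⟩ : PrimeSpectrum S) →
      P.comap (algebraMap B S) = P'.comap (algebraMap B S) → P = P') :
    ∀ 𝔭 ∈ minimalPrimes B, ∃ P ∈ minimalPrimes S,
      P.comap (algebraMap B S) = 𝔭 ∧ ringKrullDim (S ⧸ P) = ringKrullDim (B ⧸ 𝔭) :=
  exists_minimalPrime_with_coheight_eq_general e he hsurj hext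
end

section
/- Let B be a Noetherian ring, z an indeterminate, A = B[[z]], and X a poset. If φ : X → Spec(B) is a saturated embedding, then ψ : X → Spec(A) defined by ψ(u) = (φ(u), z)A (the ideal generated by φ(u) and z) is a saturated embedding. -/
/-!
The ideal `(P, z)` of `B⟦z⟧` is the preimage of `P` under the surjection
`constantCoeff : B⟦z⟧ → B`, whose kernel is `(z)`. For a surjective ring map `f`, `comap f` is an
order embedding of `Spec` onto `V(ker f)`; this set is upward closed, so a prime strictly between
two primes of the image lies in the image itself, and coverings are preserved.
-/

open PowerSeries

namespace PrimeSpectrum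

variable {R S : Type*} [CommRing R] [CommRing S]

lemma isUpperSet_zeroLocus (s : Set R) : IsUpperSet (zeroLocus s) :=
  fun _ _ hpq hp => Set.Subset.trans hp hpq

noncomputable def comapOrderEmbeddingOfSurjective {f : R →+* S} (hf : Function.Surjective f) :
    PrimeSpectrum S ↪o PrimeSpectrum R :=
  (Ideal.primeSpectrumOrderIsoZeroLocusOfSurj f hf rfl).toOrderEmbedding.trans
    (OrderEmbedding.subtype _)

lemma comap_le_comap_iff_of_surjective {f : R →+* S} (hf : Function.Surjective f)
    {p q : PrimeSpectrum S} : comap f p ≤ comap f q ↔ p ≤ q :=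
  (comapOrderEmbeddingOfSurjective hf).le_iff_le

lemma comap_covBy_comap_of_surjective {f : R →+* S} (hf : Function.Surjective f)
    {p q : PrimeSpectrum S} (h : p ⋖ q) : comap f p ⋖ comap f q := by
  have hrange : Set.range (comapOrderEmbeddingOfSurjective hf) = zeroLocus (RingHom.ker f) :=
    range_comap_of_surjective _ f hf
  exact h.image (comapOrderEmbeddingOfSurjective hf)
    (hrange ▸ (isUpperSet_zeroLocus _).ordConnected)

end PrimeSpectrum

lemma Ideal.comap_eq_map_sup_ker_of_rightInverse {R S : Type*} [CommRing R] [CommRing S]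
    {f : R →+* S} {g : S →+* R} (hfg : Function.RightInverse g f) (P : Ideal S) :
    P.comap f = P.map g ⊔ RingHom.ker f := by
  have hP : (P.map g).map f = P := by
    rw [Ideal.map_map, (RingHom.ext hfg : f.comp g = RingHom.id S), Ideal.map_id]
  conv_lhs => rw [← hP]
  rw [Ideal.comap_map_of_surjective f hfg.surjective, RingHom.ker_eq_comap_bot]

lemma PowerSeries.ker_constantCoeff {R : Type*} [CommRing R] :
    RingHom.ker (constantCoeff (R := R)) = Ideal.span {(X : R⟦X⟧)} := by
  ext f
  rw [RingHom.mem_ker, Ideal.mem_span_singleton, X_dvd_iff]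

theorem saturated_embedding_powerSeries_general
    {B : Type*} [CommRing B]
    {X : Type*} [PartialOrder X]
    (φ : X → PrimeSpectrum B)
    (hemb : ∀ a b : X, a ≤ b ↔ φ a ≤ φ b)
    (hsat : ∀ a b : X, a ⋖ b → φ a ⋖ φ b)
    (ψ : X → PrimeSpectrum (PowerSeries B))
    (hψ : ∀ u : X, ψ u = PrimeSpectrum.comap (PowerSeries.constantCoeff (R := B)) (φ u)) :
    (∀ u : X, (ψ u).asIdeal =
        (φ u).asIdeal.map (PowerSeries.C (R := B)) ⊔ Ideal.span {(PowerSeries.X : PowerSeries B)}) ∧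
      (∀ a b : X, a ≤ b ↔ ψ a ≤ ψ b) ∧ (∀ a b : X, a ⋖ b → ψ a ⋖ ψ b) := by
  refine ⟨fun u => ?_, fun a b => ?_, fun a b hab => ?_⟩
  · rw [hψ, PrimeSpectrum.comap_asIdeal, ← ker_constantCoeff]
    exact Ideal.comap_eq_map_sup_ker_of_rightInverse (fun b => constantCoeff_C b) _
  · rw [hemb, hψ, hψ, PrimeSpectrum.comap_le_comap_iff_of_surjective constantCoeff_surj]
  · rw [hψ, hψ]
    exact PrimeSpectrum.comap_covBy_comap_of_surjective constantCoeff_surj (hsat a b hab)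

/-- Let `B` be a Noetherian ring, `A = B[[z]]`, and `X` a poset.  If
`φ : X → Spec B` is a saturated embedding, then `ψ : X → Spec A` given by
`ψ u = (φ u, z)A` is a saturated embedding. -/
theorem saturated_embedding_powerSeries
    {B : Type*} [CommRing B] [IsNoetherianRing B]
    {X : Type*} [PartialOrder X]
    (φ : X → PrimeSpectrum B)
    (hemb : ∀ a b : X, a ≤ b ↔ φ a ≤ φ b)
    (hsat : ∀ a b : X, a ⋖ b → φ a ⋖ φ b)
    (ψ : X → PrimeSpectrum (PowerSeries B))
    (hψ : ∀ u : X, ψ u = PrimeSpectrum.comap (PowerSeries.constantCoeff (R := B)) (φ u)) :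
    (∀ u : X, (ψ u).asIdeal =
        (φ u).asIdeal.map (PowerSeries.C (R := B)) ⊔ Ideal.span {(PowerSeries.X : PowerSeries B)}) ∧
      (∀ a b : X, a ≤ b ↔ ψ a ≤ ψ b) ∧ (∀ a b : X, a ⋖ b → ψ a ⋖ ψ b) :=
  saturated_embedding_powerSeries_general φ hemb hsat ψ hψ
end

section
/- Let X be a finite poset such that there exist a Noetherian local UFD A and a dimension-preserving saturated embedding φ : X → Spec(A). Then X has a unique minimal node and a unique maximal node, and whenever x, y ∈ X satisfy ht(x) = 1 and y covers x, one has ht(y) = 2. -/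
/-!
The image under `φ` of a longest chain of `X` is a chain of maximal length in `Spec A`, so it
starts at `(0)` and ends at the maximal ideal; as `φ` reflects the order, the ends of that chain
are the least and the greatest element of `X`.

If `ht x = 1`, then `x` covers the bottom of `X`, so `φ x` covers `(0)` and, `A` being a UFD,
is principal, say `(f)`. If `y` covers `x` and `g ∈ φ y \ φ x`, then `φ y` is minimal over
`(f, g)`, so Krull's height theorem gives `ht (φ y) ≤ 2`, and `ht y ≤ ht (φ y)`.
-/

open Order

theorem LTSeries.head_eq_bot_of_krullDim_le {α : Type*} [PartialOrder α] [OrderBot α]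
    (p : LTSeries α) (h : krullDim α ≤ p.length) : p.head = ⊥ := by
  by_contra hne
  have hlong := LTSeries.length_le_krullDim (p.cons ⊥ (bot_lt_iff_ne_bot.2 hne))
  rw [RelSeries.cons_length] at hlong
  have := hlong.trans h
  norm_cast at this
  omega

theorem LTSeries.last_eq_top_of_krullDim_le {α : Type*} [PartialOrder α] [OrderTop α]
    (p : LTSeries α) (h : krullDim α ≤ p.length) : p.last = ⊤ := by
  by_contra hne
  have hlong := LTSeries.length_le_krullDim (p.snoc ⊤ (lt_top_iff_ne_top.2 hne))
  rw [RelSeries.snoc_length] at hlong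
  have := hlong.trans h
  norm_cast at this
  omega

theorem StrictMono.exists_apply_eq_bot_and_exists_apply_eq_top {α β : Type*} [Preorder α]
    [PartialOrder β] [OrderBot β] [OrderTop β] [FiniteDimensionalOrder β] {f : α → β}
    (hf : StrictMono f) (h : krullDim α = krullDim β) :
    (∃ a, f a = ⊥) ∧ ∃ a, f a = ⊤ := by
  have : FiniteDimensionalOrder α := finiteDimensionalOrder_iff_krullDim_ne_bot_and_top.2
    (h ▸ finiteDimensionalOrder_iff_krullDim_ne_bot_and_top.1 ‹_›)
  have hlen : krullDim β ≤ ((LTSeries.longestOf α).map f hf).length := by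
    rw [← h, krullDim_eq_length_of_finiteDimensionalOrder]
    rfl
  exact ⟨⟨_, LTSeries.head_eq_bot_of_krullDim_le _ hlen⟩,
    ⟨_, LTSeries.last_eq_top_of_krullDim_le _ hlen⟩⟩

theorem IsBot.existsUnique_isMin {α : Type*} [PartialOrder α] {b : α} (hb : IsBot b) :
    ∃! m : α, IsMin m :=
  ⟨b, hb.isMin, fun m hm => le_antisymm (hm (hb m)) (hb m)⟩

theorem IsTop.existsUnique_isMax {α : Type*} [PartialOrder α] {t : α} (ht : IsTop t) :
    ∃! m : α, IsMax m :=
  ⟨t, ht.isMax, fun m hm => le_antisymm (ht m) (hm (ht m))⟩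

theorem IsBot.covBy_of_height_eq_one {α : Type*} [PartialOrder α] {b x : α} (hb : IsBot b)
    (hx : height x = 1) : b ⋖ x := by
  have hbx : b ≠ x := by
    rintro rfl
    simp [height_eq_zero.2 hb.isMin] at hx
  refine ⟨lt_of_le_of_ne (hb x) hbx, fun z hbz hzx => ?_⟩
  have := one_lt_height_iff.2 ⟨z, b, hbz, hzx⟩
  simp [hx] at this

theorem PrimeSpectrum.exists_prime_asIdeal_eq_span_of_bot_covBy {A : Type*} [CommSemiring A]
    [IsDomain A] [UniqueFactorizationMonoid A] {p : PrimeSpectrum A} (hp : ⊥ ⋖ p) :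
    ∃ f, Prime f ∧ p.asIdeal = Ideal.span {f} := by
  obtain ⟨f, hfp, hf⟩ := p.2.exists_mem_prime_of_ne_bot fun h => hp.ne' (PrimeSpectrum.ext h)
  let P : PrimeSpectrum A := ⟨_, (Ideal.span_singleton_prime hf.ne_zero).2 hf⟩
  have hPp : P ≤ p := (Ideal.span_singleton_le_iff_mem _).2 hfp
  have hP : P ≠ ⊥ := fun h => hf.ne_zero <| Ideal.span_singleton_eq_bot.1 congr(($h).asIdeal)
  exact ⟨f, hf, congr(($((hp.eq_or_eq bot_le hPp).resolve_left hP)).asIdeal).symm⟩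

theorem PrimeSpectrum.height_le_two_of_bot_covBy_of_covBy {A : Type*} [CommRing A] [IsDomain A]
    [IsNoetherianRing A] [UniqueFactorizationMonoid A] {p q : PrimeSpectrum A} (hp : ⊥ ⋖ p)
    (hpq : p ⋖ q) : height q ≤ 2 := by
  classical
  obtain ⟨f, -, hpf⟩ := exists_prime_asIdeal_eq_span_of_bot_covBy hp
  obtain ⟨g, hgq, hgp⟩ := SetLike.exists_of_lt (show p.asIdeal < q.asIdeal from hpq.lt)
  have hfq : f ∈ q.asIdeal := hpq.le (hpf ▸ Ideal.mem_span_singleton_self f)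
  -- `q` is minimal over `(f, g)` because the only prime between `p = (f)` and `q` is `p ∌ g`.
  have hmin : q.asIdeal ∈ (Ideal.span (({f, g} : Finset A) : Set A)).minimalPrimes := by
    refine ⟨⟨q.2, ?_⟩, fun u ⟨hu, hfgu⟩ huq => ?_⟩
    · simp [Ideal.span_le, Set.insert_subset_iff, hfq, hgq]
    · simp only [Finset.coe_insert, Finset.coe_singleton, Ideal.span_le,
        Set.insert_subset_iff, Set.singleton_subset_iff, SetLike.mem_coe] at hfgu
      have hpu : p ≤ ⟨u, hu⟩ := by
        change p.asIdeal ≤ u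
        rw [hpf, Ideal.span_singleton_le_iff_mem]
        exact hfgu.1
      rcases hpq.eq_or_eq hpu huq with hup | huq'
      · exact absurd (congr(($hup).asIdeal) ▸ hfgu.2) hgp
      · exact congr(($huq').asIdeal).ge
  rw [← q.height_eq_orderHeight]
  exact (Ideal.height_le_card_of_mem_minimalPrimes_span_finset hmin).trans
    (by exact_mod_cast Finset.card_le_two)

theorem necessity_of_conditions_for_dimension_preserving_embedding_general
    {X : Type*} [PartialOrder X]
    {A : Type*} [CommRing A] [IsDomain A] [IsNoetherianRing A] [IsLocalRing A]
    [UniqueFactorizationMonoid A]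
    (φ : X → PrimeSpectrum A)
    (hemb : ∀ a b : X, a ≤ b ↔ φ a ≤ φ b)
    (hsat : ∀ a b : X, a ⋖ b → φ a ⋖ φ b)
    (hdim : Order.krullDim X = ringKrullDim A) :
    (∃! m : X, IsMin m) ∧ (∃! m : X, IsMax m) ∧
      ∀ x y : X, Order.height x = 1 → x ⋖ y → Order.height y = 2 := by
  have hφ : StrictMono φ := strictMono_of_le_iff_le hemb
  obtain ⟨⟨b, hb⟩, ⟨t, ht⟩⟩ := hφ.exists_apply_eq_bot_and_exists_apply_eq_top hdim
  have hbot : IsBot b := fun z => (hemb b z).2 (hb ▸ bot_le)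
  have htop : IsTop t := fun z => (hemb z t).2 (ht ▸ le_top)
  refine ⟨hbot.existsUnique_isMin, htop.existsUnique_isMax, fun x y hx hxy => le_antisymm ?_ ?_⟩
  · have hx' : ⊥ ⋖ φ x := hb ▸ hsat b x (hbot.covBy_of_height_eq_one hx)
    exact (height_le_height_apply_of_strictMono φ hφ y).trans
      (PrimeSpectrum.height_le_two_of_bot_covBy_of_covBy hx' (hsat x y hxy))
  · simpa [hx, one_add_one_eq_two] using height_add_one_le hxy.lt

/-- Let `X` be a finite poset admitting a dimension-preserving saturated
embedding `φ` into the spectrum of a Noetherian local UFD `A`.  Then `X` has a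
unique minimal node and a unique maximal node, and whenever `x, y ∈ X` satisfy
`ht x = 1` and `y` covers `x`, one has `ht y = 2`. -/
theorem necessity_of_conditions_for_dimension_preserving_embedding
    {X : Type*} [PartialOrder X] [Finite X] [Nonempty X]
    {A : Type*} [CommRing A] [IsDomain A] [IsNoetherianRing A] [IsLocalRing A]
    [UniqueFactorizationMonoid A]
    (φ : X → PrimeSpectrum A)
    (hemb : ∀ a b : X, a ≤ b ↔ φ a ≤ φ b)
    (hsat : ∀ a b : X, a ⋖ b → φ a ⋖ φ b)
    (hdim : Order.krullDim X = ringKrullDim A) :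
    (∃! m : X, IsMin m) ∧ (∃! m : X, IsMax m) ∧
      ∀ x y : X, Order.height x = 1 → x ⋖ y → Order.height y = 2 :=
  necessity_of_conditions_for_dimension_preserving_embedding_general φ hemb hsat hdim
end
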